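/- Let ρ and σ be two n-qubit quantum states. Then ∑_{a ∈ (Fin n → Fin 4)} |(trace ρ²)·p_ρ(a) − (trace σ²)·p_σ(a)| ≤ 2·‖ρ − σ‖₁; equivalently, (1/2ⁿ)·∑_a |⟨P_a⟩_ρ² − ⟨P_a⟩_σ²| ≤ 2·‖ρ − σ‖₁. -/

import Mathlib

open Matrix Kronecker
open scoped ComplexOrder

noncomputable def pauli1 : Fin 4 → Matrix (Fin 2) (Fin 2) ℂ
  | 0 => !![1, 0; 0, 1]
  | 1 => !![0, 1; 1, 0]
  | 2 => !![0, -Complex.I; Complex.I, 0]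
  | 3 => !![1, 0; 0, -1]

noncomputable def PauliOp {n : ℕ} (a : Fin n → Fin 4) :
    Matrix (Fin n → Fin 2) (Fin n → Fin 2) ℂ :=
  Matrix.of fun z z' => ∏ i, pauli1 (a i) (z i) (z' i)

/-- The trace norm of a matrix: the trace of the positive semidefinite square root of `Aᴴ * A`. -/
noncomputable def traceNorm {m : Type*} [Fintype m] [DecidableEq m]
    (A : Matrix m m ℂ) : ℝ :=
  ((Matrix.posSemidef_conjTranspose_mul_self A).1.eigenvectorUnitary.1 *
    diagonal ((fun x : ℝ => (x : ℂ)) ∘ (√·) ∘ (Matrix.posSemidef_conjTranspose_mul_self A).1.eigenvalues) *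
    (star (Matrix.posSemidef_conjTranspose_mul_self A).1.eigenvectorUnitary :
      Matrix m m ℂ)).trace.re

/-- A quantum state: positive semidefinite with unit trace. -/
structure IsState {m : Type*} [Fintype m] (ρ : Matrix m m ℂ) : Prop where
  posSemidef : ρ.PosSemidef
  trace_one : ρ.trace = 1

/-- Pauli expectation value `⟨P_a⟩_ρ`. -/
noncomputable def pExp {n : ℕ} (ρ : Matrix (Fin n → Fin 2) (Fin n → Fin 2) ℂ)
    (a : Fin n → Fin 4) : ℝ := ((PauliOp a * ρ).trace).re

/-- The purity `tr ρ²`. -/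
noncomputable def purity {m : Type*} [Fintype m] (ρ : Matrix m m ℂ) : ℝ :=
  ((ρ * ρ).trace).re

/-- The Pauli distribution `p_ρ`. -/
noncomputable def pDist {n : ℕ} (ρ : Matrix (Fin n → Fin 2) (Fin n → Fin 2) ℂ)
    (a : Fin n → Fin 4) : ℝ := (pExp ρ a) ^ 2 / (2 ^ n * purity ρ)

/-- The cumulative distribution function `F_ρ`. -/
noncomputable def cdf {n : ℕ} (ρ : Matrix (Fin n → Fin 2) (Fin n → Fin 2) ℂ)
    (ε : ℝ) : ℝ := ∑ a : Fin n → Fin 4, if (pExp ρ a) ^ 2 ≤ ε then pDist ρ a else 0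

/-- The maximally entangled state `|Φ₀⟩`. -/
noncomputable def Phi0 (n : ℕ) : (Fin n → Fin 2) × (Fin n → Fin 2) → ℂ :=
  fun p => if p.1 = p.2 then (↑(Real.sqrt (2 ^ n)))⁻¹ else 0

/-- The Bell state `|Φ_a⟩ = (1 ⊗ P_a)|Φ₀⟩`. -/
noncomputable def BellVec {n : ℕ} (a : Fin n → Fin 4) :
    (Fin n → Fin 2) × (Fin n → Fin 2) → ℂ :=
  ((1 : Matrix (Fin n → Fin 2) (Fin n → Fin 2) ℂ) ⊗ₖ PauliOp a).mulVec (Phi0 n)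

/-- The Bell distribution `q_ρ(a) = ⟨Φ_a| ρ ⊗ ρ |Φ_a⟩`. -/
noncomputable def qDist {n : ℕ} (ρ : Matrix (Fin n → Fin 2) (Fin n → Fin 2) ℂ)
    (a : Fin n → Fin 4) : ℝ :=
  (star (BellVec a) ⬝ᵥ ((ρ ⊗ₖ ρ).mulVec (BellVec a))).re

/-- The W state. -/
noncomputable def Wstate (n : ℕ) : (Fin n → Fin 2) → ℂ :=
  fun z => if (∑ i, (z i : ℕ)) = 1 then (↑(Real.sqrt n))⁻¹ else 0

/-- The W state projector `|W_n⟩⟨W_n|`. -/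
noncomputable def Wproj (n : ℕ) : Matrix (Fin n → Fin 2) (Fin n → Fin 2) ℂ :=
  Matrix.vecMulVec (Wstate n) (star (Wstate n))

/-! The Pauli operators are an orthogonal basis for the Hilbert–Schmidt inner product:
`∑ₐ tr(Pₐ A) tr(Pₐ B) = 2ⁿ tr(AB)`. Since `⟨Pₐ⟩_ρ² − ⟨Pₐ⟩_σ² = ⟨Pₐ⟩_{ρ−σ} ⟨Pₐ⟩_{ρ+σ}`,
Cauchy–Schwarz bounds `∑ₐ |⟨Pₐ⟩_ρ² − ⟨Pₐ⟩_σ²|` by `2ⁿ √(tr (ρ−σ)²) √(tr (ρ+σ)²)`. Finally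
`tr (ρ−σ)² ≤ ‖ρ−σ‖₁²` (squares of singular values against their sum) and
`tr (ρ+σ)² ≤ (tr (ρ+σ))² = 4` (the eigenvalues of `ρ + σ` are nonnegative). -/

lemma star_pauli1 (k : Fin 4) (x y : Fin 2) : star (pauli1 k x y) = pauli1 k y x := by
  fin_cases k <;> fin_cases x <;> fin_cases y <;> simp [pauli1]

lemma sum_pauli1_mul_pauli1 (x y u v : Fin 2) :
    ∑ k, pauli1 k x y * pauli1 k u v = if x = v ∧ y = u then 2 else 0 := by
  fin_cases x <;> fin_cases y <;> fin_cases u <;> fin_cases v <;>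
    simp [Fin.sum_univ_four, pauli1] <;> norm_num

section PauliOp

variable {n : ℕ}

lemma pauliOp_isHermitian (a : Fin n → Fin 4) : (PauliOp a).IsHermitian := by
  ext z z'
  simp [PauliOp, star_pauli1]

lemma sum_pauliOp_apply_mul_pauliOp_apply (z z' w w' : Fin n → Fin 2) :
    ∑ a, PauliOp a z z' * PauliOp a w w' = if z = w' ∧ z' = w then 2 ^ n else 0 := by
  simp only [PauliOp, of_apply, ← Finset.prod_mul_distrib]
  rw [← Fintype.prod_sum (fun i k => pauli1 k (z i) (z' i) * pauli1 k (w i) (w' i))]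
  simp only [sum_pauli1_mul_pauli1, Finset.prod_ite_zero, Finset.prod_const, Finset.card_univ,
    Fintype.card_fin, Finset.mem_univ, forall_const, forall_and, funext_iff]

lemma sum_trace_pauliOp_mul_mul_trace_pauliOp_mul
    (A B : Matrix (Fin n → Fin 2) (Fin n → Fin 2) ℂ) :
    ∑ a, (PauliOp a * A).trace * (PauliOp a * B).trace = 2 ^ n * (A * B).trace := by
  calc ∑ a, (PauliOp a * A).trace * (PauliOp a * B).trace
      = ∑ w, ∑ w', ∑ z, ∑ z', (∑ a, PauliOp a z z' * PauliOp a w w') * (A z' z * B w' w) := by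
        simp only [trace, diag, mul_apply, Finset.sum_mul, Finset.mul_sum]
        simp_rw [Finset.sum_comm (s := (Finset.univ : Finset (Fin n → Fin 4))),
          mul_mul_mul_comm]
    _ = 2 ^ n * (A * B).trace := by
        simp [sum_pauliOp_apply_mul_pauliOp_apply, ite_and, trace, mul_apply, Finset.mul_sum]

lemma Matrix.IsHermitian.ofReal_pExp {A : Matrix (Fin n → Fin 2) (Fin n → Fin 2) ℂ}
    (hA : A.IsHermitian) (a : Fin n → Fin 4) : (pExp A a : ℂ) = (PauliOp a * A).trace := by
  refine Complex.conj_eq_iff_re.mp ?_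
  rw [← Complex.star_def, ← trace_conjTranspose, conjTranspose_mul, hA.eq,
    (pauliOp_isHermitian a).eq, trace_mul_comm]

lemma Matrix.IsHermitian.sum_pExp_sq {A : Matrix (Fin n → Fin 2) (Fin n → Fin 2) ℂ}
    (hA : A.IsHermitian) :
    ∑ a, pExp A a ^ 2 = 2 ^ n * purity A := by
  have h := sum_trace_pauliOp_mul_mul_trace_pauliOp_mul A A
  rw [show (2 : ℂ) ^ n = ((2 ^ n : ℝ) : ℂ) by norm_cast] at h
  simp only [← hA.ofReal_pExp, ← Complex.ofReal_mul, ← Complex.ofReal_sum] at h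
  simpa only [sq, purity, Complex.ofReal_re, Complex.re_ofReal_mul] using congrArg Complex.re h

@[simp]
lemma pExp_add (A B : Matrix (Fin n → Fin 2) (Fin n → Fin 2) ℂ) (a : Fin n → Fin 4) :
    pExp (A + B) a = pExp A a + pExp B a := by
  simp [pExp, mul_add]

@[simp]
lemma pExp_sub (A B : Matrix (Fin n → Fin 2) (Fin n → Fin 2) ℂ) (a : Fin n → Fin 4) :
    pExp (A - B) a = pExp A a - pExp B a := by
  simp [pExp, mul_sub]

end PauliOp

section TraceInequalities

variable {m : Type*} [Fintype m] [DecidableEq m]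

lemma Matrix.IsHermitian.purity_eq_sum_sq_eigenvalues {A : Matrix m m ℂ}
    (hA : A.IsHermitian) :
    purity A = ∑ i, hA.eigenvalues i ^ 2 := by
  have hA2 : A * A = Unitary.conjStarAlgAut ℂ _ hA.eigenvectorUnitary
      (diagonal fun i => ((hA.eigenvalues i ^ 2 : ℝ) : ℂ)) := by
    conv_lhs => rw [hA.spectral_theorem]
    rw [← map_mul, diagonal_mul_diagonal]
    simp [sq]
  rw [purity, hA2, Unitary.conjStarAlgAut_apply, trace_mul_cycle, Unitary.coe_star_mul_self,
    one_mul, trace_diagonal, Complex.re_sum]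
  simp only [Complex.ofReal_re]

lemma Matrix.PosSemidef.purity_le_sq_re_trace {A : Matrix m m ℂ} (hA : A.PosSemidef) :
    purity A ≤ A.trace.re ^ 2 := by
  rw [hA.1.purity_eq_sum_sq_eigenvalues, hA.1.trace_eq_sum_eigenvalues]
  simpa using Finset.sum_sq_le_sq_sum_of_nonneg fun i _ => hA.eigenvalues_nonneg i

lemma IsState.purity_pos [Nonempty m] {ρ : Matrix m m ℂ} (hρ : IsState ρ) : 0 < purity ρ := by
  have hρ1 := hρ.posSemidef.1
  have htr : ∑ i, hρ1.eigenvalues i = 1 := by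
    simpa using congrArg Complex.re (hρ1.trace_eq_sum_eigenvalues.symm.trans hρ.trace_one)
  have hcs := sq_sum_le_card_mul_sum_sq (s := Finset.univ) (f := hρ1.eigenvalues)
  rw [htr, ← hρ1.purity_eq_sum_sq_eigenvalues, one_pow] at hcs
  exact pos_of_mul_pos_right (one_pos.trans_le hcs) (Nat.cast_nonneg _)

lemma traceNorm_eq_sum_sqrt_eigenvalues (A : Matrix m m ℂ) :
    traceNorm A = ∑ i, √((posSemidef_conjTranspose_mul_self A).1.eigenvalues i) := by
  rw [traceNorm, trace_mul_cycle, Unitary.coe_star_mul_self, one_mul, trace_diagonal,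
    Complex.re_sum]
  simp

lemma traceNorm_nonneg (A : Matrix m m ℂ) : 0 ≤ traceNorm A := by
  rw [traceNorm_eq_sum_sqrt_eigenvalues]
  exact Finset.sum_nonneg fun i _ => Real.sqrt_nonneg _

lemma Matrix.IsHermitian.purity_le_traceNorm_sq {A : Matrix m m ℂ} (hA : A.IsHermitian) :
    purity A ≤ traceNorm A ^ 2 := by
  have hAA := (posSemidef_conjTranspose_mul_self A).1
  have h : purity A = ∑ i, √(hAA.eigenvalues i) ^ 2 := by
    rw [purity, show A * A = Aᴴ * A by rw [hA.eq], hAA.trace_eq_sum_eigenvalues, Complex.re_sum]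
    simp [Real.sq_sqrt ((posSemidef_conjTranspose_mul_self A).eigenvalues_nonneg _)]
  rw [h, traceNorm_eq_sum_sqrt_eigenvalues]
  exact Finset.sum_sq_le_sq_sum_of_nonneg fun i _ => Real.sqrt_nonneg _

end TraceInequalities

lemma Finset.sum_abs_mul_le_of_sum_sq_le {ι : Type*} (s : Finset ι) {f g : ι → ℝ} {A B : ℝ}
    (hA : 0 ≤ A) (hB : 0 ≤ B) (hf : ∑ i ∈ s, f i ^ 2 ≤ A ^ 2) (hg : ∑ i ∈ s, g i ^ 2 ≤ B ^ 2) :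
    ∑ i ∈ s, |f i * g i| ≤ A * B := by
  calc ∑ i ∈ s, |f i * g i| = ∑ i ∈ s, |f i| * |g i| := by simp only [abs_mul]
    _ ≤ √(∑ i ∈ s, |f i| ^ 2) * √(∑ i ∈ s, |g i| ^ 2) := Real.sum_mul_le_sqrt_mul_sqrt _ _ _
    _ ≤ A * B := by
      simp only [sq_abs]
      exact mul_le_mul ((Real.sqrt_le_left hA).2 hf) ((Real.sqrt_le_left hB).2 hg)
        (Real.sqrt_nonneg _) hA

lemma sum_abs_pExp_sq_sub_pExp_sq_le {n : ℕ} {ρ σ : Matrix (Fin n → Fin 2) (Fin n → Fin 2) ℂ}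
    (hρ : IsState ρ) (hσ : IsState σ) :
    ∑ a, |pExp ρ a ^ 2 - pExp σ a ^ 2| ≤ 2 ^ n * (2 * traceNorm (ρ - σ)) := by
  have hsub := hρ.posSemidef.1.sub hσ.posSemidef.1
  have hadd := hρ.posSemidef.add hσ.posSemidef
  have h2n : √(2 ^ n) ^ 2 = (2 : ℝ) ^ n := Real.sq_sqrt (by positivity)
  have hdiff : ∑ a, pExp (ρ - σ) a ^ 2 ≤ (√(2 ^ n) * traceNorm (ρ - σ)) ^ 2 := by
    rw [hsub.sum_pExp_sq, mul_pow, h2n]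
    gcongr
    exact hsub.purity_le_traceNorm_sq
  have hsum : ∑ a, pExp (ρ + σ) a ^ 2 ≤ (√(2 ^ n) * 2) ^ 2 := by
    rw [hadd.1.sum_pExp_sq, mul_pow, h2n]
    gcongr
    refine hadd.purity_le_sq_re_trace.trans_eq ?_
    rw [trace_add, hρ.trace_one, hσ.trace_one]
    norm_num
  calc ∑ a, |pExp ρ a ^ 2 - pExp σ a ^ 2| = ∑ a, |pExp (ρ - σ) a * pExp (ρ + σ) a| := by
        refine Finset.sum_congr rfl fun a _ => ?_
        rw [pExp_sub, pExp_add]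
        ring_nf
    _ ≤ (√(2 ^ n) * traceNorm (ρ - σ)) * (√(2 ^ n) * 2) :=
        Finset.sum_abs_mul_le_of_sum_sq_le _ (mul_nonneg (Real.sqrt_nonneg _) (traceNorm_nonneg _))
          (by positivity) hdiff hsum
    _ = √(2 ^ n) ^ 2 * (2 * traceNorm (ρ - σ)) := by ring
    _ = 2 ^ n * (2 * traceNorm (ρ - σ)) := by rw [h2n]

theorem stmt_3_general {n : ℕ}
    (ρ σ : Matrix (Fin n → Fin 2) (Fin n → Fin 2) ℂ)
    (hρ : IsState ρ) (hσ : IsState σ) :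
    (∑ a : Fin n → Fin 4, |purity ρ * pDist ρ a - purity σ * pDist σ a|)
        ≤ 2 * traceNorm (ρ - σ) ∧
    (1 / 2 ^ n) * (∑ a : Fin n → Fin 4, |(pExp ρ a) ^ 2 - (pExp σ a) ^ 2|)
        ≤ 2 * traceNorm (ρ - σ) := by
  have h2n : (0 : ℝ) < 2 ^ n := by positivity
  have hpauli :
      (1 / 2 ^ n) * ∑ a, |pExp ρ a ^ 2 - pExp σ a ^ 2| ≤ 2 * traceNorm (ρ - σ) := by
    rw [one_div, inv_mul_le_iff₀ h2n]
    exact sum_abs_pExp_sq_sub_pExp_sq_le hρ hσ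
  refine ⟨?_, hpauli⟩
  have hterm (a : Fin n → Fin 4) :
      purity ρ * pDist ρ a - purity σ * pDist σ a =
        1 / 2 ^ n * (pExp ρ a ^ 2 - pExp σ a ^ 2) := by
    have hρ₀ := hρ.purity_pos.ne'
    have hσ₀ := hσ.purity_pos.ne'
    simp only [pDist]
    field_simp
  simpa only [hterm, abs_mul, abs_of_pos (one_div_pos.mpr h2n), ← Finset.mul_sum] using hpauli

/-- For two `n`-qubit quantum states `ρ, σ`,
`∑_a |tr(ρ²)·p_ρ(a) − tr(σ²)·p_σ(a)| ≤ 2‖ρ − σ‖₁`; equivalently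
`(1/2ⁿ)·∑_a |⟨P_a⟩_ρ² − ⟨P_a⟩_σ²| ≤ 2‖ρ − σ‖₁`. -/
theorem stmt_3 {n : ℕ} (hn : 1 ≤ n)
    (ρ σ : Matrix (Fin n → Fin 2) (Fin n → Fin 2) ℂ)
    (hρ : IsState ρ) (hσ : IsState σ) :
    (∑ a : Fin n → Fin 4, |purity ρ * pDist ρ a - purity σ * pDist σ a|)
        ≤ 2 * traceNorm (ρ - σ) ∧
    (1 / 2 ^ n) * (∑ a : Fin n → Fin 4, |(pExp ρ a) ^ 2 - (pExp σ a) ^ 2|)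
        ≤ 2 * traceNorm (ρ - σ) :=
  stmt_3_general ρ σ hρ hσ
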